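/- arXiv:2402.11482 — 3 statements merged into one kernel-verified Lean document; each statement's English description precedes it below -/
import Mathlib

section
/- For each n ∈ ℕ let (Ω_n, 𝓕_n, ℙ_n) be a probability space and let X^{(n)} : [0,∞) × Ω_n → ℝ be a stochastic process all of whose sample paths are continuous. Suppose there exist constants α, β, γ > 0 and, for each T > 0, a constant C_T > 0, such that: sup_n 𝔼^{ℙ_n} |X^{(n)}_0|^γ < ∞, and sup_n 𝔼^{ℙ_n} |X^{(n)}_t − X^{(n)}_s|^α ≤ C_T |t−s|^{1+β} for all T > 0 and all s, t ∈ [0,T]. Then the family of laws ℙ_n ∘ (X^{(n)})^{-1}, viewed as Borel probability measures on the space C([0,∞);ℝ) of continuous real functions with the topology of uniform convergence on compact sets, is tight: for every ε > 0 there is a compact subset K of C([0,∞);ℝ) with ℙ_n(X^{(n)} ∈ K^c) ≤ ε for all n. -/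
open MeasureTheory Filter Topology
open scoped ENNReal NNReal

namespace KolmAux

noncomputable def dy (j : ℕ) (t : ℝ≥0) : ℕ := ⌊t * 2 ^ j⌋₊

noncomputable def dyp (j : ℕ) (t : ℝ≥0) : ℝ≥0 := (dy j t : ℝ≥0) / 2 ^ j

lemma dyp_le (j : ℕ) (t : ℝ≥0) : dyp j t ≤ t := by
  rw [dyp, div_le_iff₀ (by positivity : (0:ℝ≥0) < 2^j)]
  exact Nat.floor_le zero_le

lemma lt_dyp_add (j : ℕ) (t : ℝ≥0) : t < dyp j t + (2 ^ j)⁻¹ := by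
  rw [dyp]
  have h := Nat.lt_floor_add_one (t * 2 ^ j)
  rw [← lt_div_iff₀ (by positivity : (0:ℝ≥0) < 2^j)] at h
  · calc t < (↑⌊t * 2 ^ j⌋₊ + 1) / 2 ^ j := h
      _ = ↑(dy j t) / 2 ^ j + (2 ^ j)⁻¹ := by rw [add_div, dy, one_div]

lemma dy_succ (j : ℕ) (t : ℝ≥0) : dy (j+1) t = 2 * dy j t ∨ dy (j+1) t = 2 * dy j t + 1 := by
  have h1 : 2 * dy j t ≤ dy (j+1) t := by
    rw [dy, dy]
    apply Nat.le_floor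
    push_cast
    calc (2:ℝ≥0) * ↑⌊t * 2 ^ j⌋₊ ≤ 2 * (t * 2 ^ j) := by
          gcongr; exact Nat.floor_le zero_le
      _ = t * 2 ^ (j+1) := by ring
  have h2 : dy (j+1) t < 2 * dy j t + 2 := by
    rw [dy, dy]
    have : t * 2 ^ (j+1) < (2 * ⌊t * 2^j⌋₊ + 2 : ℕ) := by
      push_cast
      calc t * 2 ^ (j+1) = 2 * (t * 2 ^ j) := by ring
        _ < 2 * (↑⌊t * 2^j⌋₊ + 1) := by
            have := Nat.lt_floor_add_one (t * 2 ^ j)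
            gcongr
        _ = 2 * ↑⌊t * 2^j⌋₊ + 2 := by ring
    exact Nat.floor_lt' (by omega) |>.mpr this
  omega

lemma dy_le (j : ℕ) (N : ℕ) (t : ℝ≥0) (ht : t ≤ N) : dy j t ≤ N * 2 ^ j := by
  rw [dy]
  apply Nat.floor_le_of_le
  push_cast
  gcongr

lemma dy_mono (j : ℕ) {s t : ℝ≥0} (h : s ≤ t) : dy j s ≤ dy j t := by
  exact Nat.floor_le_floor (by gcongr)

end KolmAux

namespace KolmAux
open Topology Finset in
theorem chain (f : ℝ≥0 → ℝ) (hf : Continuous f) (q : ℝ) (hq0 : 0 ≤ q) (hq1 : q < 1)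
    (N J₀ : ℕ)
    (H : ∀ j, J₀ ≤ j → ∀ k : ℕ, k + 1 ≤ N * 2 ^ j →
      |f (((k : ℝ≥0) + 1) / 2 ^ j) - f ((k : ℝ≥0) / 2 ^ j)| ≤ q ^ j)
    (J : ℕ) (hJ : J₀ ≤ J) (s t : ℝ≥0) (hs : s ≤ N) (ht : t ≤ N)
    (hst : |(t : ℝ) - (s : ℝ)| ≤ ((2 : ℝ) ^ J)⁻¹) :
    |f t - f s| ≤ q ^ J + 2 * ∑' i : ℕ, q ^ (J + 1 + i) := by
  have hsum : Summable (fun i : ℕ => q ^ (J + 1 + i)) := by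
    simpa [pow_add] using (summable_geometric_of_lt_one hq0 hq1).mul_left (q ^ (J + 1))
  have htsum_nonneg : 0 ≤ ∑' i : ℕ, q ^ (J + 1 + i) :=
    tsum_nonneg fun i => pow_nonneg hq0 _
  -- single dyadic refinement step
  have step : ∀ j : ℕ, J₀ ≤ j + 1 → ∀ u : ℝ≥0, u ≤ N →
      |f (dyp (j + 1) u) - f (dyp j u)| ≤ q ^ (j + 1) := by
    intro j hj u hu
    rcases dy_succ j u with h | h
    · have : dyp (j + 1) u = dyp j u := by
        rw [dyp, dyp, h]
        push_cast
        rw [pow_succ]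
        rw [div_eq_div_iff (by positivity) (by positivity)]
        ring
      rw [this]
      simpa using pow_nonneg hq0 (j + 1)
    · have hk : 2 * dy j u + 1 ≤ N * 2 ^ (j + 1) := by
        rw [← h]; exact dy_le _ _ _ hu
      have h1 : dyp (j + 1) u = ((2 * dy j u : ℕ) : ℝ≥0) / 2 ^ (j + 1) + (2 ^ (j+1))⁻¹ := by
        rw [dyp, h]
        push_cast
        rw [add_div, one_div]
      have h2 : dyp j u = ((2 * dy j u : ℕ) : ℝ≥0) / 2 ^ (j + 1) := by
        rw [dyp]
        push_cast
        rw [pow_succ, div_eq_div_iff (by positivity) (by positivity)]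
        ring
      have := H (j + 1) hj (2 * dy j u) hk
      rw [h1, h2]
      convert this using 3
      rw [add_div, one_div]
  -- approximation of f u by dyadic values
  have key : ∀ u : ℝ≥0, u ≤ N → |f u - f (dyp J u)| ≤ ∑' i : ℕ, q ^ (J + 1 + i) := by
    intro u hu
    have tel : ∀ n : ℕ, |f (dyp (J + n) u) - f (dyp J u)| ≤
        ∑ i ∈ range n, q ^ (J + 1 + i) := by
      intro n
      induction n with
      | zero => simp
      | succ n ih =>
        have hstep := step (J + n) (by omega) u hu
        calc |f (dyp (J + (n+1)) u) - f (dyp J u)|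
            ≤ |f (dyp (J + n + 1) u) - f (dyp (J + n) u)| + |f (dyp (J + n) u) - f (dyp J u)| := by
              rw [show J + (n+1) = J + n + 1 by omega]
              exact abs_sub_le _ _ _ |>.trans (by rw [abs_sub_comm (f (dyp (J+n) u))])
          _ ≤ q ^ (J + n + 1) + ∑ i ∈ range n, q ^ (J + 1 + i) := add_le_add hstep ih
          _ = ∑ i ∈ range (n+1), q ^ (J + 1 + i) := by
              rw [sum_range_succ, add_comm]
              congr 2
              omega
    have hlim : Tendsto (fun n : ℕ => ((dyp (J + n) u : ℝ))) atTop (𝓝 (u : ℝ)) := by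
      have hup : ∀ n : ℕ, (dyp (J + n) u : ℝ) ≤ (u : ℝ) := fun n => by
        exact_mod_cast dyp_le (J + n) u
      have hlow : ∀ n : ℕ, (u : ℝ) - ((2 : ℝ) ^ (J + n))⁻¹ ≤ (dyp (J + n) u : ℝ) := fun n => by
        have := (lt_dyp_add (J + n) u).le
        have h2 : (u : ℝ) ≤ (dyp (J + n) u : ℝ) + ((2 : ℝ) ^ (J + n))⁻¹ := by
          exact_mod_cast this
        linarith
      have hpow : Tendsto (fun n : ℕ => (u : ℝ) - ((2 : ℝ) ^ (J + n))⁻¹) atTop (𝓝 ((u : ℝ) - 0)) := by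
        apply Tendsto.const_sub
        have : Tendsto (fun n : ℕ => ((2 : ℝ)⁻¹) ^ n) atTop (𝓝 0) :=
          tendsto_pow_atTop_nhds_zero_of_lt_one (by norm_num) (by norm_num)
        have h2 : Tendsto (fun n : ℕ => ((2 : ℝ)⁻¹) ^ (J + n)) atTop (𝓝 0) := by
          simpa [Function.comp_def, add_comm] using this.comp (tendsto_add_atTop_nat J)
        simpa [inv_pow] using h2
      have hpow' : Tendsto (fun n : ℕ => (u : ℝ) - ((2 : ℝ) ^ (J + n))⁻¹) atTop (𝓝 (u : ℝ)) := by
        simpa using hpow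
      exact tendsto_of_tendsto_of_tendsto_of_le_of_le hpow'
        (tendsto_const_nhds : Tendsto (fun _ : ℕ => (u:ℝ)) atTop (𝓝 (u:ℝ)))
        hlow hup
    have hlim' : Tendsto (fun n : ℕ => dyp (J + n) u) atTop (𝓝 u) := by
      rw [← NNReal.tendsto_coe] at *
      exact hlim
    have hflim : Tendsto (fun n : ℕ => |f (dyp (J + n) u) - f (dyp J u)|) atTop
        (𝓝 |f u - f (dyp J u)|) :=
      (((hf.tendsto u).comp hlim').sub tendsto_const_nhds).abs
    exact le_of_tendsto hflim (Filter.Eventually.of_forall fun n =>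
      (tel n).trans (Summable.sum_le_tsum (range n) (fun i _ => pow_nonneg hq0 _) hsum))
  -- grid step
  have grid' : ∀ u v : ℝ≥0, u ≤ v → v ≤ N → (v : ℝ) - (u : ℝ) ≤ ((2:ℝ) ^ J)⁻¹ →
      |f (dyp J v) - f (dyp J u)| ≤ q ^ J := by
    intro u v huv hv hd
    have h1 : dy J u ≤ dy J v := dy_mono J huv
    have h2 : dy J v ≤ dy J u + 1 := by
      have hr : (v : ℝ) * 2 ^ J ≤ (u : ℝ) * 2 ^ J + 1 := by
        have h2J : (0:ℝ) < 2 ^ J := by positivity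
        nlinarith [mul_le_mul_of_nonneg_right hd (le_of_lt h2J), inv_mul_cancel₀ (ne_of_gt h2J)]
      have hnn : v * 2 ^ J ≤ u * 2 ^ J + 1 := by
        rw [← NNReal.coe_le_coe]
        push_cast
        exact hr
      calc dy J v = ⌊v * 2 ^ J⌋₊ := rfl
        _ ≤ ⌊u * 2 ^ J + 1⌋₊ := Nat.floor_le_floor hnn
        _ = dy J u + 1 := by rw [Nat.floor_add_one zero_le]; rfl
    rcases (by omega : dy J v = dy J u ∨ dy J v = dy J u + 1) with h | h
    · rw [dyp, dyp, h, sub_self, abs_zero]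
      exact pow_nonneg hq0 _
    · have hk : dy J u + 1 ≤ N * 2 ^ J := by rw [← h]; exact dy_le _ _ _ hv
      have := H J hJ (dy J u) hk
      have e1 : dyp J v = ((dy J u : ℝ≥0) + 1) / 2 ^ J := by rw [dyp, h]; push_cast; ring_nf
      have e2 : dyp J u = (dy J u : ℝ≥0) / 2 ^ J := rfl
      rw [e1, e2]
      exact this
  have grid : |f (dyp J t) - f (dyp J s)| ≤ q ^ J := by
    rcases le_total s t with h | h
    · exact grid' s t h ht (abs_le.mp hst).2
    · rw [abs_sub_comm]
      exact grid' t s h hs (by linarith [(abs_le.mp hst).1])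
  calc |f t - f s|
      ≤ |f t - f (dyp J t)| + |f (dyp J t) - f s| := abs_sub_le _ _ _
    _ ≤ |f t - f (dyp J t)| + (|f (dyp J t) - f (dyp J s)| + |f (dyp J s) - f s|) := by
        gcongr; exact abs_sub_le _ _ _
    _ ≤ (∑' i : ℕ, q ^ (J + 1 + i)) + (q ^ J + ∑' i : ℕ, q ^ (J + 1 + i)) := by
        gcongr
        · exact key t ht
        · rw [abs_sub_comm]; exact key s hs
    _ = q ^ J + 2 * ∑' i : ℕ, q ^ (J + 1 + i) := by ring
end KolmAux

namespace KolmAux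
lemma bdd (g : ℝ≥0 → ℝ) (N J : ℕ) (W M : ℝ)
    (hmod : ∀ s t : ℝ≥0, s ≤ N → t ≤ N → |(t : ℝ) - (s : ℝ)| ≤ ((2:ℝ) ^ J)⁻¹ → |g t - g s| ≤ W)
    (hM : |g 0| ≤ M) (x : ℝ≥0) (hx : x ≤ N) : |g x| ≤ M + (N * 2 ^ J) * W := by
  have claim : ∀ i : ℕ, |g (min x ((i : ℝ≥0) / 2 ^ J)) - g 0| ≤ i * W := by
    intro i
    induction i with
    | zero => simp
    | succ i ih =>
      push_cast
      set a : ℝ≥0 := min x ((i : ℝ≥0) / 2 ^ J) with ha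
      set b : ℝ≥0 := min x (((i : ℝ≥0) + 1) / 2 ^ J) with hb
      have hdist : |(b : ℝ) - (a : ℝ)| ≤ ((2:ℝ) ^ J)⁻¹ := by
        have hab : a ≤ b := by
          apply min_le_min le_rfl
          gcongr
          exact le_self_add
        have hba : (b : ℝ) - (a : ℝ) ≤ ((2:ℝ) ^ J)⁻¹ := by
          rcases le_total x ((i : ℝ≥0) / 2 ^ J) with h | h
          · have hax : a = x := min_eq_left h
            have hbx : b = x := min_eq_left (h.trans (by gcongr; exact le_self_add))
            rw [hax, hbx]; simp
          · have hax : a = (i : ℝ≥0) / 2 ^ J := min_eq_right h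
            have hble : b ≤ ((i : ℝ≥0) + 1) / 2 ^ J := min_le_right _ _
            have : (b : ℝ) ≤ ((i : ℝ) + 1) / 2 ^ J := by exact_mod_cast hble
            have hax' : (a : ℝ) = (i : ℝ) / 2 ^ J := by rw [hax]; push_cast; ring
            rw [hax']
            have h2J : (0:ℝ) < 2 ^ J := by positivity
            rw [sub_le_iff_le_add]
            calc (b:ℝ) ≤ ((i:ℝ) + 1) / 2 ^ J := this
              _ = ((2:ℝ)^J)⁻¹ + (i:ℝ)/2^J := by field_simp; ring
        rw [abs_sub_le_iff]
        constructor
        · exact hba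
        · have h1 : (a : ℝ) ≤ (b : ℝ) := by exact_mod_cast hab
          have h2 : (0:ℝ) ≤ ((2:ℝ)^J)⁻¹ := by positivity
          linarith
      have hbN : b ≤ (N : ℝ≥0) := (min_le_left _ _).trans hx
      have haN : a ≤ (N : ℝ≥0) := (min_le_left _ _).trans hx
      calc |g b - g 0| ≤ |g b - g a| + |g a - g 0| := abs_sub_le _ _ _
        _ ≤ W + i * W := add_le_add (hmod a b haN hbN hdist) ih
        _ = ((i : ℝ) + 1) * W := by ring
  have hfin : min x (((N * 2 ^ J : ℕ) : ℝ≥0) / 2 ^ J) = x := by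
    apply min_eq_left
    have : ((N * 2 ^ J : ℕ) : ℝ≥0) / 2 ^ J = (N : ℝ≥0) := by
      push_cast
      field_simp
    rw [this]; exact hx
  have := claim (N * 2 ^ J)
  rw [hfin] at this
  calc |g x| ≤ |g x - g 0| + |g 0| := by
        have h2 := abs_sub_le (g x) (g 0) (0:ℝ)
        simpa using h2
    _ ≤ (N * 2 ^ J : ℕ) * W + M := add_le_add this hM
    _ = M + (N * 2 ^ J) * W := by push_cast; ring
end KolmAux

namespace KolmAux


def Cond (M : ℝ) (JJ : ℕ → ℕ) (W : ℕ → ℝ) (g : ℝ≥0 → ℝ) : Prop :=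
  |g 0| ≤ M ∧ ∀ m J : ℕ, JJ m ≤ J → ∀ s t : ℝ≥0, s ≤ (m : ℝ≥0) + 1 → t ≤ (m : ℝ≥0) + 1 →
    |(t : ℝ) - (s : ℝ)| ≤ ((2:ℝ) ^ J)⁻¹ → |g t - g s| ≤ W J

variable {M : ℝ} {JJ : ℕ → ℕ} {W : ℕ → ℝ}

lemma cond_exists_J (hW : Tendsto W atTop (𝓝 0)) {ε : ℝ} (hε : 0 < ε) (m : ℕ) :
    ∃ J, JJ m ≤ J ∧ W J < ε := by
  have h1 : ∀ᶠ J in atTop, W J < ε := hW.eventually (gt_mem_nhds hε)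
  exact ((eventually_ge_atTop (JJ m)).and h1).exists

lemma cond_mem_le {g : ℝ≥0 → ℝ} (hg : Cond M JJ W g) {b a : ℝ≥0} {J : ℕ}
    (hJ : JJ (⌊b⌋₊ + 1) ≤ J) (hab : |(a : ℝ) - (b : ℝ)| < min ((2:ℝ) ^ J)⁻¹ 1) :
    |g b - g a| ≤ W J := by
  set m := ⌊b⌋₊ + 1 with hm
  have hb : b ≤ (m : ℝ≥0) + 1 := by
    have h1 : b < (⌊b⌋₊ : ℝ≥0) + 1 := Nat.lt_floor_add_one b
    rw [← NNReal.coe_le_coe] at *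
    rw [← NNReal.coe_lt_coe] at h1
    push_cast [hm] at *
    linarith
  have ha : a ≤ (m : ℝ≥0) + 1 := by
    rw [← NNReal.coe_le_coe]
    have h1 : (a : ℝ) < (b : ℝ) + 1 := by
      have := (abs_lt.mp (hab.trans_le (min_le_right _ _))).2
      linarith
    have h2 : (b : ℝ) ≤ (⌊b⌋₊ : ℝ) + 1 := by
      exact_mod_cast (Nat.lt_floor_add_one b).le
    push_cast [hm]
    linarith
  refine hg.2 m J hJ a b ha hb (le_of_lt ?_)
  rw [abs_sub_comm]
  exact hab.trans_le (min_le_left _ _)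

lemma cond_continuous (hW : Tendsto W atTop (𝓝 0)) {g : ℝ≥0 → ℝ} (hg : Cond M JJ W g) :
    Continuous g := by
  rw [Metric.continuous_iff]
  intro b ε hε
  obtain ⟨J, hJ1, hJ2⟩ := cond_exists_J (JJ := JJ) hW hε (⌊b⌋₊ + 1)
  refine ⟨min ((2:ℝ) ^ J)⁻¹ 1, by positivity, fun a hab => ?_⟩
  rw [NNReal.dist_eq] at hab
  rw [Real.dist_eq, abs_sub_comm]
  exact (cond_mem_le hg hJ1 hab).trans_lt hJ2

lemma isClosed_cond : IsClosed {g : ℝ≥0 → ℝ | Cond M JJ W g} := by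
  have : {g : ℝ≥0 → ℝ | Cond M JJ W g} =
      {g : ℝ≥0 → ℝ | |g 0| ≤ M} ∩
      ⋂ (m : ℕ) (J : ℕ) (_ : JJ m ≤ J) (s : ℝ≥0) (t : ℝ≥0) (_ : s ≤ (m : ℝ≥0) + 1)
        (_ : t ≤ (m : ℝ≥0) + 1) (_ : |(t : ℝ) - (s : ℝ)| ≤ ((2:ℝ) ^ J)⁻¹),
        {g : ℝ≥0 → ℝ | |g t - g s| ≤ W J} := by
    ext g
    simp only [Cond, Set.mem_setOf_eq, Set.mem_inter_iff, Set.mem_iInter]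
  rw [this]
  refine IsClosed.inter ?_ ?_
  · exact isClosed_le ((continuous_apply (0 : ℝ≥0)).abs) continuous_const
  · refine isClosed_iInter fun m => isClosed_iInter fun J => isClosed_iInter fun _ =>
      isClosed_iInter fun s => isClosed_iInter fun t => isClosed_iInter fun _ =>
      isClosed_iInter fun _ => isClosed_iInter fun _ => ?_
    exact isClosed_le (((continuous_apply t).sub (continuous_apply s)).abs) continuous_const

lemma compactK (hM0 : 0 ≤ M) (hW0 : ∀ J, 0 ≤ W J) (hW : Tendsto W atTop (𝓝 0)) :
    IsCompact {f : ContinuousMap ℝ≥0 ℝ | Cond M JJ W ⇑f} := by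
  apply ArzelaAscoli.isCompact_of_equicontinuous
  · have himg : ContinuousMap.toFun '' {f : ContinuousMap ℝ≥0 ℝ | Cond M JJ W ⇑f}
        = {g : ℝ≥0 → ℝ | Cond M JJ W g} := by
      ext g
      constructor
      · rintro ⟨f, hf, rfl⟩; exact hf
      · intro hg; exact ⟨⟨g, cond_continuous hW hg⟩, hg, rfl⟩
    rw [himg]
    set B : ℝ≥0 → ℝ := fun x =>
      M + ((((⌊x⌋₊ + 1 + 1) : ℕ) : ℝ) * 2 ^ (JJ (⌊x⌋₊ + 1))) * W (JJ (⌊x⌋₊ + 1)) with hB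
    apply IsCompact.of_isClosed_subset
      (isCompact_univ_pi (fun x => isCompact_Icc (a := -(B x)) (b := B x)))
      isClosed_cond
    intro g hg
    rw [Set.mem_univ_pi]
    intro x
    rw [Set.mem_Icc, ← abs_le]
    have hmod : ∀ s t : ℝ≥0, s ≤ ((⌊x⌋₊ + 1 + 1 : ℕ) : ℝ≥0) → t ≤ ((⌊x⌋₊ + 1 + 1 : ℕ) : ℝ≥0) →
        |(t : ℝ) - (s : ℝ)| ≤ ((2:ℝ) ^ (JJ (⌊x⌋₊ + 1)))⁻¹ → |g t - g s| ≤ W (JJ (⌊x⌋₊ + 1)) := by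
      intro s t hs ht hd
      refine hg.2 (⌊x⌋₊ + 1) _ le_rfl s t ?_ ?_ hd
      · refine hs.trans_eq ?_; push_cast; ring
      · refine ht.trans_eq ?_; push_cast; ring
    have hx : x ≤ ((⌊x⌋₊ + 1 + 1 : ℕ) : ℝ≥0) := by
      have h1 : x < (⌊x⌋₊ : ℝ≥0) + 1 := Nat.lt_floor_add_one x
      refine h1.le.trans ?_
      push_cast
      rw [← NNReal.coe_le_coe]
      push_cast
      linarith
    exact bdd g (⌊x⌋₊ + 1 + 1) (JJ (⌊x⌋₊ + 1)) (W (JJ (⌊x⌋₊ + 1))) M hmod hg.1 x hx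
  · intro x₀
    rw [Metric.equicontinuousAt_iff]
    intro ε hε
    obtain ⟨J, hJ1, hJ2⟩ := cond_exists_J (JJ := JJ) hW hε (⌊x₀⌋₊ + 1)
    refine ⟨min ((2:ℝ) ^ J)⁻¹ 1, by positivity, fun x hx f => ?_⟩
    rw [NNReal.dist_eq] at hx
    rw [Real.dist_eq]
    exact (cond_mem_le f.2 hJ1 hx).trans_lt hJ2

end KolmAux

namespace KolmAux
open MeasureTheory in
lemma cheb {Ω : Type*} [MeasurableSpace Ω] (μ : Measure Ω) (Y : Ω → ℝ) (hY : Measurable Y)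
    (p : ℝ) (hp : 0 < p) (lam : ℝ) (hlam : 0 < lam) :
    μ {ω | lam < |Y ω|} ≤ (∫⁻ ω, (‖Y ω‖₊ : ℝ≥0∞) ^ p ∂μ) / ENNReal.ofReal (lam ^ p) := by
  have hsub : {ω | lam < |Y ω|} ⊆ {ω | ENNReal.ofReal (lam ^ p) ≤ (‖Y ω‖₊ : ℝ≥0∞) ^ p} := by
    intro ω hω
    have h1 : ENNReal.ofReal lam ≤ (‖Y ω‖₊ : ℝ≥0∞) := by
      rw [← enorm_eq_nnnorm, ← ofReal_norm, Real.norm_eq_abs]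
      exact ENNReal.ofReal_le_ofReal (le_of_lt hω)
    calc ENNReal.ofReal (lam ^ p) = (ENNReal.ofReal lam) ^ p :=
          (ENNReal.ofReal_rpow_of_pos hlam).symm
      _ ≤ (‖Y ω‖₊ : ℝ≥0∞) ^ p := ENNReal.rpow_le_rpow h1 hp.le
  have hmeas : AEMeasurable (fun ω => (‖Y ω‖₊ : ℝ≥0∞) ^ p) μ :=
    (ENNReal.continuous_rpow_const.measurable.comp hY.nnnorm.coe_nnreal_ennreal).aemeasurable
  refine (measure_mono hsub).trans ?_
  refine meas_ge_le_lintegral_div hmeas ?_ ENNReal.ofReal_ne_top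
  simp only [ne_eq, ENNReal.ofReal_eq_zero, not_le]
  positivity
end KolmAux

/-- Kolmogorov-type tightness criterion on `C([0,∞);ℝ)`
(Karatzas–Shreve, Problem 2.4.11), for processes defined on possibly
distinct probability spaces. -/
theorem stmt_2
    (Ω : ℕ → Type*) [∀ n, MeasurableSpace (Ω n)]
    (P : ∀ n, Measure (Ω n)) [∀ n, IsProbabilityMeasure (P n)]
    (X : ∀ n, ℝ≥0 → Ω n → ℝ)
    (hmeas : ∀ n t, Measurable (X n t))
    (hcont : ∀ n ω, Continuous (fun t => X n t ω))
    (α β γ : ℝ) (hαpos : 0 < α) (hβpos : 0 < β) (hγpos : 0 < γ)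
    (C₀ : ℝ≥0∞) (hC₀ : C₀ < ⊤)
    (hinit : ∀ n, ∫⁻ ω, (‖X n 0 ω‖₊ : ℝ≥0∞) ^ γ ∂(P n) ≤ C₀)
    (hmom : ∀ T : ℝ≥0, 0 < T → ∃ C : ℝ≥0∞, 0 < C ∧ C < ⊤ ∧
      ∀ n, ∀ s t : ℝ≥0, s ≤ T → t ≤ T →
        ∫⁻ ω, (‖X n t ω - X n s ω‖₊ : ℝ≥0∞) ^ α ∂(P n)
          ≤ C * ENNReal.ofReal (|(t : ℝ) - (s : ℝ)| ^ (1 + β))) :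
    ∀ ε : ℝ≥0∞, 0 < ε →
      ∃ K : Set (ContinuousMap ℝ≥0 ℝ), IsCompact K ∧
        ∀ n, P n {ω | (⟨fun t => X n t ω, hcont n ω⟩ : ContinuousMap ℝ≥0 ℝ) ∈ Kᶜ} ≤ ε := by
  intro ε hε
  classical
  set ε' : ℝ≥0∞ := min ε 1 with hε'def
  have hε'0 : 0 < ε' := lt_min hε zero_lt_one
  have hε'top : ε' ≠ ∞ := ((min_le_right _ _).trans_lt (by norm_num)).ne
  have hε'le : ε' ≤ ε := min_le_left _ _
  set ε₂ : ℝ≥0∞ := ε' / 2 with hε₂def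
  have hε₂0 : ε₂ ≠ 0 := by
    simp only [hε₂def, ne_eq, ENNReal.div_eq_zero_iff]
    push_neg
    exact ⟨hε'0.ne', by norm_num⟩
  have hε₂top : ε₂ ≠ ∞ := by
    exact (ENNReal.div_lt_top hε'top (by norm_num)).ne
  -- constants
  set δ : ℝ := β / (2 * α) with hδdef
  have hδ : 0 < δ := by positivity
  have hδα : δ * α = β / 2 := by rw [hδdef]; field_simp
  set q : ℝ := (2 : ℝ) ^ (-δ) with hqdef
  have hq0 : 0 < q := Real.rpow_pos_of_pos (by norm_num) _
  have hq1 : q < 1 := Real.rpow_lt_one_of_one_lt_of_neg one_lt_two (by linarith)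
  set σ : ℝ≥0∞ := ENNReal.ofReal ((2 : ℝ) ^ (-(β / 2))) with hσdef
  have hσ1 : σ < 1 := by
    rw [hσdef, ← ENNReal.ofReal_one]
    exact (ENNReal.ofReal_lt_ofReal_iff_of_nonneg (by positivity)).mpr
      (Real.rpow_lt_one_of_one_lt_of_neg one_lt_two (by linarith))
  set ρ : ℝ≥0∞ := ENNReal.ofReal ((2 : ℝ) ^ (-(1 + β / 2))) with hρdef
  have h2ρ : 2 * ρ = σ := by
    rw [hρdef, hσdef]
    rw [show (2:ℝ≥0∞) = ENNReal.ofReal 2 by simp]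
    rw [← ENNReal.ofReal_mul (by norm_num)]
    congr 1
    have h := Real.rpow_add (by norm_num : (0:ℝ) < 2) 1 (-(1 + β / 2))
    rw [Real.rpow_one] at h
    rw [← h]
    congr 1
    ring
  -- moment constants
  choose CC hCC0 hCCtop hCC using fun m : ℕ => hmom ((m : ℝ≥0) + 1) (by positivity)
  -- initial constant M
  obtain ⟨n₀, hn₀⟩ := ENNReal.exists_nat_gt (show C₀ / ε₂ ≠ ∞ from
    (ENNReal.div_lt_top hC₀.ne hε₂0).ne)
  have hn₀pos : 0 < n₀ := by
    by_contra h
    push_neg at h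
    interval_cases n₀
    simpa using lt_of_le_of_lt zero_le hn₀
  set M : ℝ≥0 := (n₀ : ℝ≥0) ^ (γ⁻¹ : ℝ) with hMdef
  have hM0 : 0 < (M : ℝ) := by
    rw [hMdef]
    push_cast
    exact Real.rpow_pos_of_pos (by exact_mod_cast hn₀pos) _
  have hMγ : ENNReal.ofReal ((M : ℝ) ^ γ) = (n₀ : ℝ≥0∞) := by
    have h1 : ((M : ℝ)) ^ γ = (n₀ : ℝ) := by
      rw [hMdef]
      push_cast
      rw [← Real.rpow_mul (by positivity)]
      rw [inv_mul_cancel₀ hγpos.ne', Real.rpow_one]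
    rw [h1]
    simp
  -- choice of levels J m
  have hJex : ∀ m : ℕ, ∃ J : ℕ,
      CC m * ((m : ℝ≥0∞) + 1) * (1 - σ)⁻¹ * σ ^ J ≤ ε₂ * (2⁻¹ : ℝ≥0∞) ^ (m + 1) := by
    intro m
    have hconst : CC m * ((m : ℝ≥0∞) + 1) * (1 - σ)⁻¹ ≠ ∞ := by
      refine ENNReal.mul_ne_top (ENNReal.mul_ne_top (hCCtop m).ne ?_) ?_
      · exact ENNReal.add_ne_top.mpr ⟨ENNReal.natCast_ne_top m, ENNReal.one_ne_top⟩
      · exact ENNReal.inv_ne_top.mpr (tsub_pos_of_lt hσ1).ne'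
    have hlim : Tendsto (fun J : ℕ => CC m * ((m : ℝ≥0∞) + 1) * (1 - σ)⁻¹ * σ ^ J)
        atTop (𝓝 0) := by
      have hσlim : Tendsto (fun J : ℕ => σ ^ J) atTop (𝓝 0) :=
        ENNReal.tendsto_pow_atTop_nhds_zero_of_lt_one hσ1
      have := ENNReal.Tendsto.const_mul hσlim (Or.inr hconst)
      simpa [mul_zero] using this
    have hpos : 0 < ε₂ * (2⁻¹ : ℝ≥0∞) ^ (m + 1) := by
      exact ENNReal.mul_pos hε₂0 (ENNReal.pow_pos (by simp) _).ne'
    exact (hlim.eventually_le_const hpos).exists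
  choose JJ hJJ using hJex
  -- modulus W
  set W : ℕ → ℝ := fun J => q ^ J + 2 * ∑' i : ℕ, q ^ (J + 1 + i) with hWdef
  have hWtsum : ∀ J : ℕ, ∑' i : ℕ, q ^ (J + 1 + i) = q ^ (J + 1) * (1 - q)⁻¹ := by
    intro J
    simp_rw [pow_add]
    rw [tsum_mul_left, tsum_geometric_of_lt_one hq0.le hq1]
  have h1q : 0 < 1 - q := by linarith
  have hW0 : ∀ J, 0 ≤ W J := by
    intro J
    rw [hWdef]
    simp only []
    rw [hWtsum]
    positivity
  have hWlim : Tendsto W atTop (𝓝 0) := by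
    have hWeq : W = fun J => q ^ J * (1 + 2 * (q * (1 - q)⁻¹)) := by
      funext J
      rw [hWdef]
      simp only []
      rw [hWtsum, pow_succ]
      ring
    rw [hWeq]
    have := (tendsto_pow_atTop_nhds_zero_of_lt_one hq0.le hq1).mul_const
      (1 + 2 * (q * (1 - q)⁻¹))
    simpa using this
  -- the compact set
  refine ⟨{f : ContinuousMap ℝ≥0 ℝ | KolmAux.Cond (M : ℝ) JJ W ⇑f},
    KolmAux.compactK hM0.le hW0 hWlim, ?_⟩
  intro n
  -- bad events
  set E0 : Set (Ω n) := {ω | (M : ℝ) < |X n 0 ω|} with hE0def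
  set E : ℕ → ℕ → Set (Ω n) := fun j k =>
    {ω | q ^ j < |X n (((k : ℝ≥0) + 1) / 2 ^ j) ω - X n ((k : ℝ≥0) / 2 ^ j) ω|} with hEdef
  -- the path of a "good" sample lies in the compact set
  have hsub : {ω | (⟨fun t => X n t ω, hcont n ω⟩ : ContinuousMap ℝ≥0 ℝ) ∈
      {f : ContinuousMap ℝ≥0 ℝ | KolmAux.Cond (M : ℝ) JJ W ⇑f}ᶜ} ⊆
      E0 ∪ ⋃ (m : ℕ) (i : ℕ) (k : ℕ) (_ : k ∈ Finset.range ((m + 1) * 2 ^ (JJ m + i))),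
        E (JJ m + i) k := by
    intro ω hω
    by_contra hbad
    rw [Set.mem_union] at hbad
    push_neg at hbad
    obtain ⟨hb1, hb2⟩ := hbad
    simp only [Set.mem_iUnion, not_exists] at hb2
    refine hω ?_
    show KolmAux.Cond (M : ℝ) JJ W (fun t => X n t ω)
    constructor
    · exact not_lt.mp (fun h => hb1 h)
    · intro m J hJ s t hs ht hd
      have H : ∀ j, JJ m ≤ j → ∀ k : ℕ, k + 1 ≤ (m + 1) * 2 ^ j →
          |X n (((k : ℝ≥0) + 1) / 2 ^ j) ω - X n ((k : ℝ≥0) / 2 ^ j) ω| ≤ q ^ j := by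
        intro j hj k hk
        obtain ⟨i, rfl⟩ : ∃ i, j = JJ m + i := ⟨j - JJ m, by omega⟩
        have hmem : k ∈ Finset.range ((m + 1) * 2 ^ (JJ m + i)) := Finset.mem_range.mpr (by omega)
        have := hb2 m i k hmem
        exact not_lt.mp this
      have hs' : s ≤ ((m + 1 : ℕ) : ℝ≥0) := by push_cast; exact hs
      have ht' : t ≤ ((m + 1 : ℕ) : ℝ≥0) := by push_cast; exact ht
      exact KolmAux.chain (fun t => X n t ω) (hcont n ω) q hq0.le hq1 (m + 1) (JJ m)
        H J hJ s t hs' ht' hd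
  -- bound on the initial event
  have hE0bound : P n E0 ≤ ε₂ := by
    have hch := KolmAux.cheb (P n) (X n 0) (hmeas n 0) γ hγpos (M : ℝ) hM0
    calc P n E0 ≤ (∫⁻ ω, (‖X n 0 ω‖₊ : ℝ≥0∞) ^ γ ∂(P n)) / ENNReal.ofReal ((M : ℝ) ^ γ) := hch
      _ ≤ C₀ / (n₀ : ℝ≥0∞) := by rw [hMγ]; gcongr; exact hinit n
      _ ≤ ε₂ := by
          rw [ENNReal.div_le_iff (by exact_mod_cast hn₀pos.ne') (ENNReal.natCast_ne_top n₀)]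
          have := (ENNReal.div_lt_iff (Or.inl hε₂0) (Or.inl hε₂top)).mp hn₀
          exact le_of_lt (by rw [mul_comm] at this; exact this)
  -- bound on a single increment event
  have hEbound : ∀ m j k : ℕ, k + 1 ≤ (m + 1) * 2 ^ j → P n (E j k) ≤ CC m * ρ ^ j := by
    intro m j k hk
    have hY : Measurable (fun ω => X n (((k : ℝ≥0) + 1) / 2 ^ j) ω - X n ((k : ℝ≥0) / 2 ^ j) ω) :=
      (hmeas n _).sub (hmeas n _)
    have hch := KolmAux.cheb (P n) _ hY α hαpos (q ^ j) (pow_pos hq0 j)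
    have hpow2 : ((k : ℝ≥0) + 1) ≤ ((m : ℝ≥0) + 1) * 2 ^ j := by
      have : ((k + 1 : ℕ) : ℝ≥0) ≤ (((m + 1) * 2 ^ j : ℕ) : ℝ≥0) := by exact_mod_cast hk
      push_cast at this
      exact_mod_cast this
    have hts : ((k : ℝ≥0) + 1) / 2 ^ j ≤ (m : ℝ≥0) + 1 := by
      rw [div_le_iff₀ (by positivity : (0:ℝ≥0) < 2 ^ j)]
      exact hpow2
    have hss : (k : ℝ≥0) / 2 ^ j ≤ (m : ℝ≥0) + 1 := by
      refine le_trans ?_ hts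
      gcongr
      exact le_self_add
    have hint := hCC m n ((k : ℝ≥0) / 2 ^ j) (((k : ℝ≥0) + 1) / 2 ^ j) hss hts
    have habs : |(((((k : ℝ≥0) + 1) / 2 ^ j : ℝ≥0)) : ℝ) - (((k : ℝ≥0) / 2 ^ j : ℝ≥0) : ℝ)|
        = ((2 : ℝ) ^ j)⁻¹ := by
      push_cast
      rw [div_sub_div_same]
      rw [show ((k : ℝ) + 1 - k) = 1 by ring]
      rw [abs_of_nonneg (by positivity)]
      rw [one_div]
    calc P n (E j k)
        ≤ (∫⁻ ω, (‖X n (((k : ℝ≥0) + 1) / 2 ^ j) ω - X n ((k : ℝ≥0) / 2 ^ j) ω‖₊ : ℝ≥0∞) ^ α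
            ∂(P n)) / ENNReal.ofReal ((q ^ j) ^ α) := hch
      _ ≤ (CC m * ENNReal.ofReal
            (|(((((k : ℝ≥0) + 1) / 2 ^ j : ℝ≥0)) : ℝ) - (((k : ℝ≥0) / 2 ^ j : ℝ≥0) : ℝ)| ^ (1 + β)))
            / ENNReal.ofReal ((q ^ j) ^ α) := by gcongr
      _ = CC m * ρ ^ j := by
          rw [habs, mul_div_assoc]
          congr 1
          rw [← ENNReal.ofReal_div_of_pos (by positivity)]
          rw [hρdef, ← ENNReal.ofReal_pow (by positivity)]
          congr 1
          have e1 : ((2 : ℝ) ^ j)⁻¹ = (2 : ℝ) ^ (-(j : ℝ)) := by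
            rw [← Real.rpow_natCast 2 j, ← Real.rpow_neg (by norm_num)]
          have e3 : (q ^ j) ^ α = (2 : ℝ) ^ (-δ * j * α) := by
            rw [← Real.rpow_natCast q j, hqdef,
              ← Real.rpow_mul (by norm_num : (0:ℝ) ≤ 2),
              ← Real.rpow_mul (by norm_num : (0:ℝ) ≤ 2), mul_assoc]
          rw [e1]
          rw [← Real.rpow_mul (by norm_num : (0:ℝ) ≤ 2)]
          rw [e3]
          rw [← Real.rpow_sub (by norm_num : (0:ℝ) < 2)]
          rw [← Real.rpow_natCast ((2:ℝ) ^ (-(1 + β / 2))) j,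
            ← Real.rpow_mul (by norm_num : (0:ℝ) ≤ 2)]
          congr 1
          linear_combination (j : ℝ) * hδα
  -- bound on the union over one horizon m
  have hUm : ∀ m : ℕ, (∑' i : ℕ, P n (⋃ (k : ℕ) (_ : k ∈ Finset.range ((m + 1) * 2 ^ (JJ m + i))),
      E (JJ m + i) k)) ≤ ε₂ * (2⁻¹ : ℝ≥0∞) ^ (m + 1) := by
    intro m
    have hstep : ∀ i : ℕ, P n (⋃ (k : ℕ) (_ : k ∈ Finset.range ((m + 1) * 2 ^ (JJ m + i))),
        E (JJ m + i) k) ≤ CC m * ((m : ℝ≥0∞) + 1) * σ ^ (JJ m + i) := by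
      intro i
      set j := JJ m + i with hj
      calc P n (⋃ (k : ℕ) (_ : k ∈ Finset.range ((m + 1) * 2 ^ j)), E j k)
          ≤ ∑ k ∈ Finset.range ((m + 1) * 2 ^ j), P n (E j k) :=
            measure_biUnion_finset_le _ _
        _ ≤ ∑ _k ∈ Finset.range ((m + 1) * 2 ^ j), CC m * ρ ^ j := by
            refine Finset.sum_le_sum fun k hkmem => ?_
            exact hEbound m j k (by have := Finset.mem_range.mp hkmem; omega)
        _ = (((m + 1) * 2 ^ j : ℕ) : ℝ≥0∞) * (CC m * ρ ^ j) := by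
            rw [Finset.sum_const, Finset.card_range, nsmul_eq_mul]
        _ = CC m * ((m : ℝ≥0∞) + 1) * σ ^ j := by
            push_cast
            rw [← h2ρ, mul_pow]
            ring
    calc (∑' i : ℕ, P n (⋃ (k : ℕ) (_ : k ∈ Finset.range ((m + 1) * 2 ^ (JJ m + i))),
        E (JJ m + i) k))
        ≤ ∑' i : ℕ, CC m * ((m : ℝ≥0∞) + 1) * σ ^ (JJ m + i) := ENNReal.tsum_le_tsum hstep
      _ = CC m * ((m : ℝ≥0∞) + 1) * σ ^ (JJ m) * ∑' i : ℕ, σ ^ i := by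
          rw [← ENNReal.tsum_mul_left]
          exact tsum_congr fun i => by rw [pow_add]; ring
      _ = CC m * ((m : ℝ≥0∞) + 1) * (1 - σ)⁻¹ * σ ^ (JJ m) := by
          rw [ENNReal.tsum_geometric]
          ring
      _ ≤ ε₂ * (2⁻¹ : ℝ≥0∞) ^ (m + 1) := hJJ m
  -- put everything together
  calc P n {ω | (⟨fun t => X n t ω, hcont n ω⟩ : ContinuousMap ℝ≥0 ℝ) ∈
        {f : ContinuousMap ℝ≥0 ℝ | KolmAux.Cond (M : ℝ) JJ W ⇑f}ᶜ}
      ≤ P n (E0 ∪ ⋃ (m : ℕ) (i : ℕ) (k : ℕ) (_ : k ∈ Finset.range ((m + 1) * 2 ^ (JJ m + i))),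
          E (JJ m + i) k) := measure_mono hsub
    _ ≤ P n E0 + P n (⋃ (m : ℕ) (i : ℕ) (k : ℕ)
          (_ : k ∈ Finset.range ((m + 1) * 2 ^ (JJ m + i))), E (JJ m + i) k) :=
        measure_union_le _ _
    _ ≤ ε₂ + ε₂ := by
        refine add_le_add hE0bound ?_
        calc P n (⋃ (m : ℕ) (i : ℕ) (k : ℕ)
              (_ : k ∈ Finset.range ((m + 1) * 2 ^ (JJ m + i))), E (JJ m + i) k)
            ≤ ∑' m : ℕ, P n (⋃ (i : ℕ) (k : ℕ)
              (_ : k ∈ Finset.range ((m + 1) * 2 ^ (JJ m + i))), E (JJ m + i) k) :=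
              measure_iUnion_le _
          _ ≤ ∑' m : ℕ, ∑' i : ℕ, P n (⋃ (k : ℕ)
              (_ : k ∈ Finset.range ((m + 1) * 2 ^ (JJ m + i))), E (JJ m + i) k) :=
              ENNReal.tsum_le_tsum fun m => measure_iUnion_le _
          _ ≤ ∑' m : ℕ, ε₂ * (2⁻¹ : ℝ≥0∞) ^ (m + 1) := ENNReal.tsum_le_tsum hUm
          _ = ε₂ * ∑' m : ℕ, (2⁻¹ : ℝ≥0∞) ^ (m + 1) := ENNReal.tsum_mul_left
          _ = ε₂ := by
              rw [ENNReal.tsum_geometric_add_one, ENNReal.one_sub_inv_two, inv_inv,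
                ENNReal.inv_mul_cancel (by norm_num) (by norm_num), mul_one]
    _ = ε' := ENNReal.add_halves ε'
    _ ≤ ε := hε'le
end

section
/- Assume in addition that α is even, i.e. α(−y) = α(y) for all y. Then for every x ∈ ℝ³ the Duchon–Robert identity holds: ∫_{ℝ³} ∇α(y) · δ_y u(x) · |δ_y u(x)|² dy = div[ u(|u|²)_ℓ − (u|u|²)_ℓ ](x) + 2E(x), where E := Σ_{i,j} [ u^j ∂_i (u^i u^j)_ℓ − u^i u^j ∂_i u^j_ℓ ], u(|u|²)_ℓ has components u^i·(α∗|u|²) and (u|u|²)_ℓ has components α∗(u^i|u|²). -/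
open MeasureTheory

/-- Convolution `(a ∗ f)(x) = ∫ a(y) f(x−y) dy` of scalar functions on `ℝ³`. -/
noncomputable def conv (a f : (Fin 3 → ℝ) → ℝ) : (Fin 3 → ℝ) → ℝ :=
  fun x => ∫ y, a y * f (x - y)

/-- Partial derivative `∂ᵢf(x)`. -/
noncomputable def pd (f : (Fin 3 → ℝ) → ℝ) (i : Fin 3) (x : Fin 3 → ℝ) : ℝ :=
  fderiv ℝ f x (Pi.single i 1)

section DRAux

open Convolution ContinuousLinearMap Function

lemma conv_eq_convolution (a f : (Fin 3 → ℝ) → ℝ) :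
    conv a f = (a ⋆[lsmul ℝ ℝ, volume] f) := by
  funext x
  simp [conv, convolution_def]

lemma pd_continuous {f : (Fin 3 → ℝ) → ℝ} (hf : ContDiff ℝ (⊤ : ℕ∞) f) (i : Fin 3) :
    Continuous (pd f i) :=
  (hf.continuous_fderiv (by simp)).clm_apply continuous_const

lemma pd_hcs {f : (Fin 3 → ℝ) → ℝ} (hf : HasCompactSupport f) (i : Fin 3) :
    HasCompactSupport (pd f i) :=
  (hf.fderiv ℝ).comp_left (g := fun L : (Fin 3 → ℝ) →L[ℝ] ℝ => L (Pi.single i 1)) rfl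

lemma pd_neg {a : (Fin 3 → ℝ) → ℝ} (ha : ContDiff ℝ (⊤ : ℕ∞) a)
    (heven : ∀ y, a (-y) = a y) (i : Fin 3) (y : Fin 3 → ℝ) :
    pd a i (-y) = - pd a i y := by
  have hd := ha.differentiable (by simp)
  have h1 : HasFDerivAt (fun z : Fin 3 → ℝ => a (-z))
      ((fderiv ℝ a (-y)).comp (-(ContinuousLinearMap.id ℝ (Fin 3 → ℝ)))) y := by
    have h := (hd (-y)).hasFDerivAt.comp y ((hasFDerivAt_id y).neg)
    simpa [Function.comp_def] using h
  have h2 : (fun z : Fin 3 → ℝ => a (-z)) = a := funext heven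
  rw [h2] at h1
  have h3 := h1.fderiv
  unfold pd
  rw [h3]
  simp

lemma integrable_aux {g P : (Fin 3 → ℝ) → ℝ} (hg : Continuous g) (hgs : HasCompactSupport g)
    (hP : Continuous P) (x : Fin 3 → ℝ) :
    Integrable (fun y => g y * P (x + y)) :=
  ((hg.mul (hP.comp (continuous_const.add continuous_id))).integrable_of_hasCompactSupport
    (hgs.mul_right))

lemma integrable_aux' {g P : (Fin 3 → ℝ) → ℝ} (hg : Continuous g) (hgs : HasCompactSupport g)
    (hP : Continuous P) (x : Fin 3 → ℝ) :
    Integrable (fun y => g y * P (x - y)) :=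
  ((hg.mul (hP.comp (continuous_const.sub continuous_id))).integrable_of_hasCompactSupport
    (hgs.mul_right))

lemma integral_pd_eq_zero {a : (Fin 3 → ℝ) → ℝ} (ha : ContDiff ℝ (⊤ : ℕ∞) a)
    (heven : ∀ y, a (-y) = a y) (i : Fin 3) : (∫ y, pd a i y) = 0 := by
  have h1 : (∫ y, pd a i (-y)) = ∫ y, pd a i y := integral_neg_eq_self _ _
  simp only [pd_neg ha heven, integral_neg] at h1
  linarith

lemma pd_conv_left {a F : (Fin 3 → ℝ) → ℝ} (ha : ContDiff ℝ (⊤ : ℕ∞) a) (has : HasCompactSupport a)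
    (hF : Continuous F) (i : Fin 3) (x : Fin 3 → ℝ) :
    pd (conv a F) i x = ∫ y, pd a i y * F (x - y) := by
  have hconv := has.hasFDerivAt_convolution_left (μ := volume) (lsmul ℝ ℝ) (ha.of_le (by simp))
    hF.locallyIntegrable x
  rw [conv_eq_convolution]
  unfold pd
  rw [hconv.fderiv, convolution_def]
  have hint : Integrable (fun t => ((lsmul ℝ ℝ).precompL (Fin 3 → ℝ) (fderiv ℝ a t))
      (F (x - t))) volume := by
    apply Continuous.integrable_of_hasCompactSupport
    · exact ((((lsmul ℝ ℝ).precompL (Fin 3 → ℝ)).continuous.comp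
        (ha.continuous_fderiv (by simp))).clm_apply
        (hF.comp (continuous_const.sub continuous_id)))
    · apply (has.fderiv ℝ).mono
      intro t ht
      simp only [Function.mem_support, ne_eq] at ht ⊢
      intro h
      apply ht
      rw [h]
      simp
  rw [ContinuousLinearMap.integral_apply hint]
  congr 1

lemma pd_conv_right {a F : (Fin 3 → ℝ) → ℝ} (ha : ContDiff ℝ (⊤ : ℕ∞) a) (has : HasCompactSupport a)
    (hF : ContDiff ℝ (⊤ : ℕ∞) F) (hFs : HasCompactSupport F) (i : Fin 3) (x : Fin 3 → ℝ) :
    pd (conv a F) i x = ∫ y, a y * pd F i (x - y) := by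
  have hconv := hFs.hasFDerivAt_convolution_right (μ := volume) (lsmul ℝ ℝ)
    (ha.continuous.locallyIntegrable) (hF.of_le (by simp)) x
  rw [conv_eq_convolution]
  unfold pd
  rw [hconv.fderiv, convolution_def]
  have hint : Integrable (fun t => ((lsmul ℝ ℝ).precompR (Fin 3 → ℝ) (a t))
      (fderiv ℝ F (x - t))) volume := by
    apply Continuous.integrable_of_hasCompactSupport
    · exact ((((lsmul ℝ ℝ).precompR (Fin 3 → ℝ)).continuous.comp ha.continuous).clm_apply
        ((hF.continuous_fderiv (by simp)).comp (continuous_const.sub continuous_id)))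
    · apply has.mono
      intro t ht
      simp only [Function.mem_support, ne_eq] at ht ⊢
      intro h
      apply ht
      rw [h]
      simp
  rw [ContinuousLinearMap.integral_apply hint]
  congr 1

lemma integral_pd_mul {a F : (Fin 3 → ℝ) → ℝ} (ha : ContDiff ℝ (⊤ : ℕ∞) a) (has : HasCompactSupport a)
    (heven : ∀ y, a (-y) = a y) (hF : Continuous F) (i : Fin 3) (x : Fin 3 → ℝ) :
    (∫ y, pd a i y * F (x + y)) = - pd (conv a F) i x := by
  have h1 : (∫ y, pd a i (-y) * F (x + -y)) = ∫ y, pd a i y * F (x + y) :=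
    integral_neg_eq_self (fun y => pd a i y * F (x + y)) volume
  rw [← h1]
  simp only [pd_neg ha heven, neg_mul, ← sub_eq_add_neg]
  rw [integral_neg, pd_conv_left ha has hF]

lemma conv_diff {a F : (Fin 3 → ℝ) → ℝ} (ha : ContDiff ℝ (⊤ : ℕ∞) a) (has : HasCompactSupport a)
    (hF : Continuous F) (x : Fin 3 → ℝ) : DifferentiableAt ℝ (conv a F) x := by
  rw [conv_eq_convolution]
  have h := has.contDiff_convolution_left (μ := volume) (lsmul ℝ ℝ) (n := 1)
    (ha.of_le (by simp)) hF.locallyIntegrable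
  exact (h.differentiable (by simp)).differentiableAt

lemma pd_sub {f g : (Fin 3 → ℝ) → ℝ} {x : Fin 3 → ℝ} (hf : DifferentiableAt ℝ f x)
    (hg : DifferentiableAt ℝ g x) (i : Fin 3) :
    pd (fun z => f z - g z) i x = pd f i x - pd g i x := by
  unfold pd
  rw [fderiv_fun_sub hf hg]
  simp

lemma pd_mul {f g : (Fin 3 → ℝ) → ℝ} {x : Fin 3 → ℝ} (hf : DifferentiableAt ℝ f x)
    (hg : DifferentiableAt ℝ g x) (i : Fin 3) :
    pd (fun z => f z * g z) i x = pd f i x * g x + f x * pd g i x := by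
  unfold pd
  rw [fderiv_fun_mul hf hg]
  simp [smul_eq_mul]
  ring

lemma pd_sum {f : Fin 3 → (Fin 3 → ℝ) → ℝ} {x : Fin 3 → ℝ}
    (hf : ∀ j, DifferentiableAt ℝ (f j) x) (i : Fin 3) :
    pd (fun z => ∑ j, f j z) i x = ∑ j, pd (f j) i x := by
  unfold pd
  rw [fderiv_fun_sum (fun j _ => hf j)]
  simp

lemma conv_sum {a : (Fin 3 → ℝ) → ℝ} {F : Fin 3 → (Fin 3 → ℝ) → ℝ}
    (ha : Continuous a) (has : HasCompactSupport a) (hF : ∀ j, Continuous (F j)) :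
    conv a (fun w => ∑ j, F j w) = fun z => ∑ j, conv a (F j) z := by
  funext z
  unfold conv
  rw [← integral_finset_sum _ (fun j _ => integrable_aux' ha has (hF j) z)]
  congr 1
  funext y
  rw [Finset.mul_sum]

lemma integral_six {h1 h2 h3 h4 h5 h6 : (Fin 3 → ℝ) → ℝ}
    (H1 : Integrable h1) (H2 : Integrable h2) (H3 : Integrable h3)
    (H4 : Integrable h4) (H5 : Integrable h5) (H6 : Integrable h6) :
    (∫ y, (h1 y + h2 y + h3 y + h4 y + h5 y + h6 y))
      = (∫ y, h1 y) + (∫ y, h2 y) + (∫ y, h3 y) + (∫ y, h4 y) + (∫ y, h5 y) + (∫ y, h6 y) := by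
  have A2 : Integrable (fun y => h1 y + h2 y) := H1.add H2
  have A3 : Integrable (fun y => h1 y + h2 y + h3 y) := A2.add H3
  have A4 : Integrable (fun y => h1 y + h2 y + h3 y + h4 y) := A3.add H4
  have A5 : Integrable (fun y => h1 y + h2 y + h3 y + h4 y + h5 y) := A4.add H5
  have e6 : (∫ y, (h1 y + h2 y + h3 y + h4 y + h5 y + h6 y))
      = (∫ y, (h1 y + h2 y + h3 y + h4 y + h5 y)) + ∫ y, h6 y := integral_add A5 H6
  have e5 : (∫ y, (h1 y + h2 y + h3 y + h4 y + h5 y))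
      = (∫ y, (h1 y + h2 y + h3 y + h4 y)) + ∫ y, h5 y := integral_add A4 H5
  have e4 : (∫ y, (h1 y + h2 y + h3 y + h4 y))
      = (∫ y, (h1 y + h2 y + h3 y)) + ∫ y, h4 y := integral_add A3 H4
  have e3 : (∫ y, (h1 y + h2 y + h3 y)) = (∫ y, (h1 y + h2 y)) + ∫ y, h3 y := integral_add A2 H3
  have e2 : (∫ y, (h1 y + h2 y)) = (∫ y, h1 y) + ∫ y, h2 y := integral_add H1 H2
  rw [e6, e5, e4, e3, e2]

end DRAux

/-- The Duchon–Robert identity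
`∫ ∇a(y)·δ_yu(x) |δ_yu(x)|² dy = div[u(|u|²)_ℓ − (u|u|²)_ℓ](x) + 2E(x)`
for a smooth compactly supported divergence-free `u` and an even mollifier `a`. -/
theorem stmt_11
    (u : (Fin 3 → ℝ) → Fin 3 → ℝ) (a : (Fin 3 → ℝ) → ℝ)
    (hu : ContDiff ℝ (⊤ : ℕ∞) u) (hus : HasCompactSupport u)
    (ha : ContDiff ℝ (⊤ : ℕ∞) a) (has : HasCompactSupport a)
    (hdiv : ∀ x, ∑ i, pd (fun y => u y i) i x = 0)
    (heven : ∀ y, a (-y) = a y)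
    (x : Fin 3 → ℝ) :
    (∫ y, (∑ i, pd a i y * (u (x + y) i - u x i)) * ∑ j, (u (x + y) j - u x j) ^ 2)
    = (∑ i, pd (fun z => u z i * conv a (fun w => ∑ j, (u w j) ^ 2) z
          - conv a (fun w => u w i * ∑ j, (u w j) ^ 2) z) i x)
      + 2 * ∑ i, ∑ j, (u x j * pd (conv a fun y => u y i * u y j) i x
          - u x i * u x j * pd (conv a fun y => u y j) i x) := by
  -- basic regularity of components
  have h_ui : ∀ i, ContDiff ℝ (⊤ : ℕ∞) (fun z => u z i) := fun i =>
    (ContinuousLinearMap.proj i : ((Fin 3 → ℝ)) →L[ℝ] ℝ).contDiff.comp hu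
  have h_uis : ∀ i, HasCompactSupport (fun z => u z i) := fun i =>
    hus.comp_left (g := fun v : Fin 3 → ℝ => v i) rfl
  have hcu : ∀ i, Continuous fun z : Fin 3 → ℝ => u z i := fun i => (h_ui i).continuous
  have hpdc : ∀ i : Fin 3, Continuous (pd a i) := fun i => pd_continuous ha i
  have hpds : ∀ i : Fin 3, HasCompactSupport (pd a i) := fun i => pd_hcs has i
  have c12 : ∀ i j : Fin 3, Continuous fun z : Fin 3 → ℝ => u z i * u z j ^ 2 :=
    fun i j => (hcu i).mul ((hcu j).pow 2)
  have c11 : ∀ i j : Fin 3, Continuous fun z : Fin 3 → ℝ => u z i * u z j :=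
    fun i j => (hcu i).mul (hcu j)
  have csq : ∀ j : Fin 3, Continuous fun z : Fin 3 → ℝ => u z j ^ 2 := fun j => (hcu j).pow 2
  -- integrability of all pieces
  have hint_ij : ∀ i j : Fin 3, Integrable
      (fun y => pd a i y * ((u (x + y) i - u x i) * (u (x + y) j - u x j) ^ 2)) := by
    intro i j
    exact integrable_aux (hpdc i) (hpds i)
      (((hcu i).sub continuous_const).mul (((hcu j).sub continuous_const).pow 2)) x
  -- Step 1: split the integral into a double sum of integrals
  have hsplit : (∫ y, (∑ i, pd a i y * (u (x + y) i - u x i)) * ∑ j, (u (x + y) j - u x j) ^ 2)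
      = ∑ i, ∑ j, ∫ y, pd a i y * ((u (x + y) i - u x i) * (u (x + y) j - u x j) ^ 2) := by
    calc (∫ y, (∑ i, pd a i y * (u (x + y) i - u x i)) * ∑ j, (u (x + y) j - u x j) ^ 2)
        = ∫ y, ∑ i, ∑ j, pd a i y * ((u (x + y) i - u x i) * (u (x + y) j - u x j) ^ 2) := by
          congr 1
          funext y
          rw [Finset.sum_mul]
          refine Finset.sum_congr rfl fun i _ => ?_
          rw [Finset.mul_sum]
          exact Finset.sum_congr rfl fun j _ => by ring
      _ = ∑ i, ∫ y, ∑ j, pd a i y * ((u (x + y) i - u x i) * (u (x + y) j - u x j) ^ 2) :=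
          integral_finset_sum _ (fun i _ => integrable_finset_sum _ fun j _ => hint_ij i j)
      _ = ∑ i, ∑ j, ∫ y, pd a i y * ((u (x + y) i - u x i) * (u (x + y) j - u x j) ^ 2) :=
          Finset.sum_congr rfl fun i _ => integral_finset_sum _ fun j _ => hint_ij i j
  -- Step 2: evaluate each (i,j) integral
  have hij : ∀ i j : Fin 3,
      (∫ y, pd a i y * ((u (x + y) i - u x i) * (u (x + y) j - u x j) ^ 2))
      = -(pd (conv a fun z => u z i * u z j ^ 2) i x)
        + 2 * u x j * pd (conv a fun z => u z i * u z j) i x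
        - u x j ^ 2 * pd (conv a fun z => u z i) i x
        + u x i * pd (conv a fun z => u z j ^ 2) i x
        - 2 * (u x i * u x j * pd (conv a fun z => u z j) i x) := by
    intro i j
    have e : (fun y => pd a i y * ((u (x + y) i - u x i) * (u (x + y) j - u x j) ^ 2))
        = fun y => (pd a i y * (u (x + y) i * u (x + y) j ^ 2))
          + (-2 * u x j) * (pd a i y * (u (x + y) i * u (x + y) j))
          + (u x j ^ 2) * (pd a i y * u (x + y) i)
          + (-(u x i)) * (pd a i y * u (x + y) j ^ 2)
          + (2 * (u x i * u x j)) * (pd a i y * u (x + y) j)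
          + (-(u x i) * u x j ^ 2) * pd a i y := by
      funext y
      ring
    have I1 : Integrable (fun y => pd a i y * (u (x + y) i * u (x + y) j ^ 2)) :=
      integrable_aux (hpdc i) (hpds i) (c12 i j) x
    have I2 : Integrable (fun y => pd a i y * (u (x + y) i * u (x + y) j)) :=
      integrable_aux (hpdc i) (hpds i) (c11 i j) x
    have I3 : Integrable (fun y => pd a i y * u (x + y) i) :=
      integrable_aux (hpdc i) (hpds i) (hcu i) x
    have I4 : Integrable (fun y => pd a i y * u (x + y) j ^ 2) :=
      integrable_aux (hpdc i) (hpds i) (csq j) x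
    have I5 : Integrable (fun y => pd a i y * u (x + y) j) :=
      integrable_aux (hpdc i) (hpds i) (hcu j) x
    have I6 : Integrable (pd a i) :=
      (hpdc i).integrable_of_hasCompactSupport (hpds i)
    have k1 : (∫ y, pd a i y * (u (x + y) i * u (x + y) j ^ 2))
        = -(pd (conv a fun z => u z i * u z j ^ 2) i x) :=
      integral_pd_mul ha has heven (c12 i j) i x
    have k2 : (∫ y, pd a i y * (u (x + y) i * u (x + y) j))
        = -(pd (conv a fun z => u z i * u z j) i x) :=
      integral_pd_mul ha has heven (c11 i j) i x
    have k3 : (∫ y, pd a i y * u (x + y) i) = -(pd (conv a fun z => u z i) i x) :=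
      integral_pd_mul ha has heven (hcu i) i x
    have k4 : (∫ y, pd a i y * u (x + y) j ^ 2) = -(pd (conv a fun z => u z j ^ 2) i x) :=
      integral_pd_mul ha has heven (csq j) i x
    have k5 : (∫ y, pd a i y * u (x + y) j) = -(pd (conv a fun z => u z j) i x) :=
      integral_pd_mul ha has heven (hcu j) i x
    rw [e, integral_six I1 (I2.const_mul _) (I3.const_mul _) (I4.const_mul _) (I5.const_mul _)
      (I6.const_mul _)]
    simp only [integral_const_mul]
    rw [k1, k2, k3, k4, k5, integral_pd_eq_zero ha heven i]
    ring
  -- the divergence-free facts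
  have hdivx := hdiv x
  have hQ3 : (∑ i, pd (conv a fun z => u z i) i x) = 0 := by
    have h1 : ∀ i : Fin 3, pd (conv a fun z => u z i) i x
        = ∫ y, a y * pd (fun z => u z i) i (x - y) := fun i =>
      pd_conv_right ha has (h_ui i) (h_uis i) i x
    simp only [h1]
    rw [← integral_finset_sum _
      (fun i _ => integrable_aux' ha.continuous has (pd_continuous (h_ui i) i) x)]
    have h2 : ∀ y : Fin 3 → ℝ, (∑ i, a y * pd (fun z => u z i) i (x - y)) = 0 := by
      intro y
      rw [← Finset.mul_sum, hdiv (x - y), mul_zero]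
    simp only [h2, integral_zero]
  -- Step 3: rewrite the divergence term on the RHS
  have hA : ∀ i : Fin 3, pd (fun z => u z i * conv a (fun w => ∑ j, (u w j) ^ 2) z
        - conv a (fun w => u w i * ∑ j, (u w j) ^ 2) z) i x
      = pd (fun z => u z i) i x * conv a (fun w => ∑ j, (u w j) ^ 2) x
        + u x i * ∑ j, pd (conv a fun z => u z j ^ 2) i x
        - ∑ j, pd (conv a fun z => u z i * u z j ^ 2) i x := by
    intro i
    have hdF4 : DifferentiableAt ℝ (conv a (fun w => ∑ j, (u w j) ^ 2)) x :=
      conv_diff ha has (continuous_finset_sum _ fun j _ => csq j) x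
    have hdF1 : DifferentiableAt ℝ (conv a (fun w => u w i * ∑ j, (u w j) ^ 2)) x :=
      conv_diff ha has ((hcu i).mul (continuous_finset_sum _ fun j _ => csq j)) x
    have hdui : DifferentiableAt ℝ (fun z => u z i) x :=
      ((h_ui i).differentiable (by simp)).differentiableAt
    have s1 : pd (fun z => u z i * conv a (fun w => ∑ j, (u w j) ^ 2) z
          - conv a (fun w => u w i * ∑ j, (u w j) ^ 2) z) i x
        = pd (fun z => u z i * conv a (fun w => ∑ j, (u w j) ^ 2) z) i x
          - pd (conv a (fun w => u w i * ∑ j, (u w j) ^ 2)) i x :=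
      pd_sub (hdui.mul hdF4) hdF1 i
    have s2 : pd (fun z => u z i * conv a (fun w => ∑ j, (u w j) ^ 2) z) i x
        = pd (fun z => u z i) i x * conv a (fun w => ∑ j, (u w j) ^ 2) x
          + u x i * pd (conv a (fun w => ∑ j, (u w j) ^ 2)) i x :=
      pd_mul hdui hdF4 i
    have e4 : conv a (fun w => ∑ j, (u w j) ^ 2)
        = fun z => ∑ j, conv a (fun w => u w j ^ 2) z :=
      conv_sum ha.continuous has csq
    have s4 : pd (conv a (fun w => ∑ j, (u w j) ^ 2)) i x
        = ∑ j, pd (conv a fun z => u z j ^ 2) i x := by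
      rw [e4]
      exact pd_sum (fun j => conv_diff ha has (csq j) x) i
    have e1 : conv a (fun w => u w i * ∑ j, (u w j) ^ 2)
        = fun z => ∑ j, conv a (fun w => u w i * u w j ^ 2) z := by
      rw [show (fun w => u w i * ∑ j, (u w j) ^ 2) = fun w => ∑ j, u w i * u w j ^ 2 by
        funext w; rw [Finset.mul_sum]]
      exact conv_sum ha.continuous has (c12 i)
    have s3 : pd (conv a (fun w => u w i * ∑ j, (u w j) ^ 2)) i x
        = ∑ j, pd (conv a fun z => u z i * u z j ^ 2) i x := by
      rw [e1]
      exact pd_sum (fun j => conv_diff ha has (c12 i j) x) i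
    rw [s1, s2, s3, s4]
  -- final assembly
  rw [hsplit]
  simp only [hij, hA]
  set S : (Fin 3 → ℝ) → ℝ := (fun w => ∑ j, (u w j) ^ 2) with hS
  simp only [Fin.sum_univ_three] at hdivx hQ3 ⊢
  linear_combination (-(u x 0 ^ 2 + u x 1 ^ 2 + u x 2 ^ 2)) * hQ3
    - (conv a S x) * hdivx
end

section
/- Let u, u_n : X → H (n ∈ ℕ) be strongly measurable with u ∈ L²(μ;H). If u_n → u μ-almost everywhere in H and ∫_X ‖u_n − u‖² dμ → 0 as n → ∞, then ∫_X Σ_{k=1}^{∞} ‖ς_k(u_n) − ς_k(u)‖² dμ → 0 as n → ∞. -/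
open MeasureTheory Filter
open scoped ENNReal NNReal

private lemma stmt14_sq_add_le (a b : ℝ≥0∞) : (a + b) ^ 2 ≤ 4 * (a ^ 2 + b ^ 2) := by
  rcases le_total a b with h | h
  · calc (a + b) ^ 2 ≤ (b + b) ^ 2 := by gcongr
      _ = 4 * b ^ 2 := by ring
      _ ≤ 4 * (a ^ 2 + b ^ 2) := by gcongr; exact le_add_self
  · calc (a + b) ^ 2 ≤ (a + a) ^ 2 := by gcongr
      _ = 4 * a ^ 2 := by ring
      _ ≤ 4 * (a ^ 2 + b ^ 2) := by gcongr; exact le_self_add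

private lemma stmt14_nnnorm_sq {H : Type*} [NormedAddCommGroup H] (x y : H) :
    (‖x - y‖₊ : ℝ≥0∞) ^ 2 ≤ 4 * ((‖x‖₊ : ℝ≥0∞) ^ 2 + (‖y‖₊ : ℝ≥0∞) ^ 2) := by
  calc (‖x - y‖₊ : ℝ≥0∞) ^ 2 ≤ ((‖x‖₊ : ℝ≥0∞) + (‖y‖₊ : ℝ≥0∞)) ^ 2 := by
        gcongr
        exact_mod_cast ENNReal.coe_le_coe.2 (nnnorm_sub_le x y)
    _ ≤ 4 * ((‖x‖₊ : ℝ≥0∞) ^ 2 + (‖y‖₊ : ℝ≥0∞) ^ 2) := stmt14_sq_add_le _ _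

private lemma stmt14_ofReal_one_add_sq {H : Type*} [NormedAddCommGroup H] (v : H) :
    ENNReal.ofReal (1 + ‖v‖ ^ 2) = 1 + (‖v‖₊ : ℝ≥0∞) ^ 2 := by
  rw [ENNReal.ofReal_add zero_le_one (sq_nonneg _), ENNReal.ofReal_one,
    ENNReal.ofReal_pow (norm_nonneg _), ofReal_norm]; rfl

set_option maxHeartbeats 1000000 in
/-- Pointwise convergence of the noise sums along a convergent sequence. -/
private lemma stmt14_ptwise {H : Type*} [NormedAddCommGroup H]
    (ς : ℕ → H → H) (hςcont : ∀ k, Continuous (ς k))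
    (htail : Tendsto (fun N : ℕ =>
        ⨆ v : H, (∑' k : {k : ℕ // N < k}, (‖ς (k : ℕ) v‖₊ : ℝ≥0∞) ^ 2)
          / ENNReal.ofReal (1 + ‖v‖ ^ 2)) atTop (nhds 0))
    (v : H) (vs : ℕ → H) (hvs : Tendsto vs atTop (nhds v)) :
    Tendsto (fun n => ∑' k, (‖ς k (vs n) - ς k v‖₊ : ℝ≥0∞) ^ 2) atTop (nhds 0) := by
  rw [ENNReal.tendsto_nhds_zero]
  intro ε hε
  set ε' : ℝ≥0∞ := min ε 1 with hε'def
  have hε' : 0 < ε' := lt_min hε zero_lt_one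
  have hε'top : ε' ≠ ∞ := ne_top_of_le_ne_top ENNReal.one_ne_top (min_le_right _ _)
  set M : ℝ≥0∞ := ((1 + (‖v‖₊ + 1) ^ 2 : ℝ≥0) : ℝ≥0∞) with hMdef
  have hM0 : M ≠ 0 := by
    simp only [hMdef, ENNReal.coe_ne_zero]
    positivity
  have hMtop : M ≠ ∞ := ENNReal.coe_ne_top
  set δ : ℝ≥0∞ := ε' / 2 / (8 * M) with hδdef
  have hδ : 0 < δ :=
    ENNReal.div_pos (ENNReal.half_pos hε'.ne').ne' (ENNReal.mul_ne_top (by norm_num) hMtop)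
  -- choose N from the tail condition
  obtain ⟨N, hN⟩ := (ENNReal.tendsto_atTop_zero.1 htail) δ hδ
  have htailN : ∀ w : H,
      (∑' k : {k : ℕ // N < k}, (‖ς (k : ℕ) w‖₊ : ℝ≥0∞) ^ 2) ≤ δ * (1 + (‖w‖₊ : ℝ≥0∞) ^ 2) := by
    intro w
    have h1 : (∑' k : {k : ℕ // N < k}, (‖ς (k : ℕ) w‖₊ : ℝ≥0∞) ^ 2)
        / ENNReal.ofReal (1 + ‖w‖ ^ 2) ≤ δ :=
      le_trans (le_iSup (fun w : H => (∑' k : {k : ℕ // N < k}, (‖ς (k : ℕ) w‖₊ : ℝ≥0∞) ^ 2)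
        / ENNReal.ofReal (1 + ‖w‖ ^ 2)) w) (hN N le_rfl)
    rw [stmt14_ofReal_one_add_sq] at h1
    have hb0 : (1 + (‖w‖₊ : ℝ≥0∞) ^ 2) ≠ 0 := (lt_of_lt_of_le one_pos le_self_add).ne'
    have hbt : (1 + (‖w‖₊ : ℝ≥0∞) ^ 2) ≠ ∞ := by
      refine ENNReal.add_ne_top.2 ⟨ENNReal.one_ne_top, ?_⟩
      exact ENNReal.pow_ne_top ENNReal.coe_ne_top
    calc (∑' k : {k : ℕ // N < k}, (‖ς (k : ℕ) w‖₊ : ℝ≥0∞) ^ 2)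
        = (∑' k : {k : ℕ // N < k}, (‖ς (k : ℕ) w‖₊ : ℝ≥0∞) ^ 2)
            / (1 + (‖w‖₊ : ℝ≥0∞) ^ 2) * (1 + (‖w‖₊ : ℝ≥0∞) ^ 2) := by
          rw [ENNReal.div_mul_cancel hb0 hbt]
      _ ≤ δ * (1 + (‖w‖₊ : ℝ≥0∞) ^ 2) := by gcongr
  -- head part tends to zero
  have hhead : Tendsto (fun n => ∑ k ∈ Finset.range (N + 1),
      (‖ς k (vs n) - ς k v‖₊ : ℝ≥0∞) ^ 2) atTop (nhds 0) := by
    have h0 : (0 : ℝ≥0∞) = ∑ k ∈ Finset.range (N + 1), (0 : ℝ≥0∞) := by simp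
    rw [h0]
    refine tendsto_finset_sum _ fun k _ => ?_
    have h2 : Tendsto (fun n => ς k (vs n)) atTop (nhds (ς k v)) :=
      ((hςcont k).tendsto v).comp hvs
    have h1 : Tendsto (fun n => ς k (vs n) - ς k v) atTop (nhds 0) := by
      have h1' := h2.sub (tendsto_const_nhds (x := ς k v))
      rwa [sub_self] at h1'
    have h3 : Tendsto (fun n => (‖ς k (vs n) - ς k v‖₊ : ℝ≥0∞)) atTop (nhds 0) := by
      rw [show (0 : ℝ≥0∞) = ((0 : ℝ≥0) : ℝ≥0∞) by simp]
      exact ENNReal.tendsto_coe.2 (by simpa [Function.comp_def] using (continuous_nnnorm.tendsto (0 : H)).comp h1)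
    simpa using ENNReal.Tendsto.pow (n := 2) h3
  have hhead' : ∀ᶠ n in atTop, ∑ k ∈ Finset.range (N + 1),
      (‖ς k (vs n) - ς k v‖₊ : ℝ≥0∞) ^ 2 ≤ ε' / 2 :=
    hhead.eventually_le_const (ENNReal.half_pos hε'.ne')
  -- eventual norm bound
  have hbnd : ∀ᶠ n in atTop, (‖vs n‖₊ : ℝ≥0∞) ≤ (‖v‖₊ : ℝ≥0∞) + 1 := by
    have h1 : ∀ᶠ n in atTop, dist (vs n) v < 1 := hvs (Metric.ball_mem_nhds v one_pos)
    filter_upwards [h1] with n hn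
    have h2 : ‖vs n‖₊ ≤ ‖v‖₊ + ‖vs n - v‖₊ := by
      simpa using nnnorm_add_le v (vs n - v)
    have h3 : ‖vs n - v‖₊ ≤ 1 := by
      rw [← NNReal.coe_le_coe]
      simpa [← dist_eq_norm] using hn.le
    calc (‖vs n‖₊ : ℝ≥0∞) ≤ ((‖v‖₊ + ‖vs n - v‖₊ : ℝ≥0) : ℝ≥0∞) := ENNReal.coe_le_coe.2 h2
      _ ≤ (‖v‖₊ : ℝ≥0∞) + 1 := by
        push_cast
        gcongr
        exact_mod_cast h3
  have hδM : δ * M = ε' / 2 * 8⁻¹ := by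
    calc δ * M = ε' / 2 * (8⁻¹ * (M⁻¹ * M)) := by
          rw [hδdef, div_eq_mul_inv (a := ε' / 2),
            ENNReal.mul_inv (Or.inl (by norm_num)) (Or.inl (by norm_num))]
          ring
      _ = ε' / 2 * 8⁻¹ := by rw [ENNReal.inv_mul_cancel hM0 hMtop, mul_one]
  have h8 : (8 : ℝ≥0∞) * (δ * M) = ε' / 2 := by
    rw [hδM, show (8 : ℝ≥0∞) * (ε' / 2 * 8⁻¹) = ε' / 2 * (8 * 8⁻¹) by ring,
      ENNReal.mul_inv_cancel (by norm_num) (by norm_num), mul_one]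
  filter_upwards [hhead', hbnd] with n h1 h2
  -- bounds on 1 + ‖·‖²
  have hMv : 1 + (‖v‖₊ : ℝ≥0∞) ^ 2 ≤ M := by
    rw [hMdef]
    push_cast
    gcongr
    exact le_self_add
  have hMn : 1 + (‖vs n‖₊ : ℝ≥0∞) ^ 2 ≤ M := by
    rw [hMdef]
    push_cast
    gcongr
  -- split the sum
  set g : ℕ → ℝ≥0∞ := fun k => (‖ς k (vs n) - ς k v‖₊ : ℝ≥0∞) ^ 2 with hgdef
  have hsplit : (∑' k, g k)
      = (∑' k : {k : ℕ | N < k}, g k) + ∑' k : ({k : ℕ | N < k}ᶜ : Set ℕ), g k :=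
    (Summable.tsum_add_tsum_compl (s := {k : ℕ | N < k}) ENNReal.summable ENNReal.summable).symm
  have hheadeq : (∑' k : ({k : ℕ | N < k}ᶜ : Set ℕ), g k)
      = ∑ k ∈ Finset.range (N + 1), g k := by
    rw [tsum_subtype]
    rw [tsum_eq_sum (s := Finset.range (N + 1)) ?h0]
    · refine Finset.sum_congr rfl fun b hb => ?_
      refine Set.indicator_of_mem ?_ g
      simp only [Finset.mem_range, Nat.lt_succ_iff] at hb
      simp [hb, Nat.not_lt.2 hb]
    · intro b hb
      refine Set.indicator_of_notMem ?_ g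
      simp only [Finset.mem_range, Nat.lt_succ_iff, Nat.not_le] at hb
      simp [hb, Nat.not_lt]
  have htailbound : (∑' k : {k : ℕ | N < k}, g k) ≤ ε' / 2 := by
    calc (∑' k : {k : ℕ | N < k}, g k)
        ≤ ∑' k : {k : ℕ // N < k},
            4 * (((‖ς (k : ℕ) (vs n)‖₊ : ℝ≥0∞)) ^ 2 + ((‖ς (k : ℕ) v‖₊ : ℝ≥0∞)) ^ 2) :=
          ENNReal.tsum_le_tsum fun k => stmt14_nnnorm_sq _ _
      _ = 4 * ((∑' k : {k : ℕ // N < k}, (‖ς (k : ℕ) (vs n)‖₊ : ℝ≥0∞) ^ 2)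
            + ∑' k : {k : ℕ // N < k}, (‖ς (k : ℕ) v‖₊ : ℝ≥0∞) ^ 2) := by
          rw [ENNReal.tsum_mul_left, ENNReal.tsum_add]
      _ ≤ 4 * (δ * (1 + (‖vs n‖₊ : ℝ≥0∞) ^ 2) + δ * (1 + (‖v‖₊ : ℝ≥0∞) ^ 2)) := by
          gcongr
          · exact htailN (vs n)
          · exact htailN v
      _ ≤ 4 * (δ * M + δ * M) := by gcongr
      _ = 8 * (δ * M) := by ring
      _ = ε' / 2 := h8
  calc (∑' k, g k)
      = (∑' k : {k : ℕ | N < k}, g k) + ∑ k ∈ Finset.range (N + 1), g k := by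
        rw [hsplit, hheadeq]
    _ ≤ ε' / 2 + ε' / 2 := add_le_add htailbound h1
    _ = ε' := ENNReal.add_halves ε'
    _ ≤ ε := min_le_left _ _

set_option maxHeartbeats 1000000 in
/-- Convergence of the noise coefficients: if `uₙ → u` a.e. and in `L²(μ;H)`, then
`∫ Σₖ ‖ςₖ(uₙ) − ςₖ(u)‖² dμ → 0`, under the linear-growth and
uniform-decay-of-tails conditions on `(ςₖ)`. -/
theorem stmt_14
    {H : Type*} [NormedAddCommGroup H] [InnerProductSpace ℝ H]
    [CompleteSpace H] [TopologicalSpace.SeparableSpace H]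
    {X : Type*} [MeasurableSpace X] (μ : Measure X) [IsFiniteMeasure μ]
    (ς : ℕ → H → H) (hςcont : ∀ k, Continuous (ς k))
    (C : ℝ) (hC : 0 < C)
    (hgrowth : ∀ v : H,
      (∑' k, (‖ς k v‖₊ : ℝ≥0∞) ^ 2) ≤ ENNReal.ofReal (C * (1 + ‖v‖ ^ 2)))
    (htail : Tendsto (fun N : ℕ =>
        ⨆ v : H, (∑' k : {k : ℕ // N < k}, (‖ς (k : ℕ) v‖₊ : ℝ≥0∞) ^ 2)
          / ENNReal.ofReal (1 + ‖v‖ ^ 2)) atTop (nhds 0))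
    (u : X → H) (un : ℕ → X → H)
    (hu : StronglyMeasurable u) (hun : ∀ n, StronglyMeasurable (un n))
    (huL2 : (∫⁻ x, (‖u x‖₊ : ℝ≥0∞) ^ 2 ∂μ) < ⊤)
    (hae : ∀ᵐ x ∂μ, Tendsto (fun n => un n x) atTop (nhds (u x)))
    (hL2 : Tendsto (fun n => ∫⁻ x, (‖un n x - u x‖₊ : ℝ≥0∞) ^ 2 ∂μ) atTop (nhds 0)) :
    Tendsto (fun n => ∫⁻ x, ∑' k, (‖ς k (un n x) - ς k (u x)‖₊ : ℝ≥0∞) ^ 2 ∂μ)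
      atTop (nhds 0) := by
  set cC : ℝ≥0∞ := ENNReal.ofReal C with hcCdef
  have hcCtop : cC ≠ ∞ := ENNReal.ofReal_ne_top
  have h16top : (16 : ℝ≥0∞) * cC ≠ ∞ := ENNReal.mul_ne_top (by norm_num) hcCtop
  -- growth in ℝ≥0∞ form
  have hg' : ∀ v : H, (∑' k, (‖ς k v‖₊ : ℝ≥0∞) ^ 2) ≤ cC * (1 + (‖v‖₊ : ℝ≥0∞) ^ 2) := by
    intro v
    calc (∑' k, (‖ς k v‖₊ : ℝ≥0∞) ^ 2) ≤ ENNReal.ofReal (C * (1 + ‖v‖ ^ 2)) := hgrowth v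
      _ = cC * (1 + (‖v‖₊ : ℝ≥0∞) ^ 2) := by
        rw [ENNReal.ofReal_mul hC.le, stmt14_ofReal_one_add_sq]
  set f : ℕ → X → ℝ≥0∞ := fun n x => ∑' k, (‖ς k (un n x) - ς k (u x)‖₊ : ℝ≥0∞) ^ 2 with hfdef
  set A : X → ℝ≥0∞ := fun x => cC * (8 + 20 * (‖u x‖₊ : ℝ≥0∞) ^ 2) with hAdef
  set G : ℕ → X → ℝ≥0∞ := fun n x => A x + 16 * cC * (‖un n x - u x‖₊ : ℝ≥0∞) ^ 2 with hGdef
  -- measurability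
  have hf_meas : ∀ n, Measurable (f n) := by
    intro n
    refine Measurable.ennreal_tsum fun k => ?_
    exact (((hςcont k).comp_stronglyMeasurable (hun n)).sub
      ((hςcont k).comp_stronglyMeasurable hu)).enorm.pow_const 2
  have hA_meas : Measurable A :=
    measurable_const.mul (measurable_const.add (measurable_const.mul (hu.enorm.pow_const 2)))
  have hd_meas : ∀ n, Measurable fun x => (‖un n x - u x‖₊ : ℝ≥0∞) ^ 2 := fun n =>
    ((hun n).sub hu).enorm.pow_const 2
  have hG_meas : ∀ n, Measurable (G n) := fun n =>
    hA_meas.add (measurable_const.mul (hd_meas n))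
  -- domination f ≤ G
  have hfG : ∀ n x, f n x ≤ G n x := by
    intro n x
    set a := un n x
    set b := u x
    have hna : (‖a‖₊ : ℝ≥0∞) ^ 2 ≤ 4 * ((‖a - b‖₊ : ℝ≥0∞) ^ 2 + (‖b‖₊ : ℝ≥0∞) ^ 2) := by
      have h1 : (‖a‖₊ : ℝ≥0∞) ≤ (‖a - b‖₊ : ℝ≥0∞) + (‖b‖₊ : ℝ≥0∞) := by
        have h2 := nnnorm_add_le (a - b) b
        rw [sub_add_cancel] at h2
        exact_mod_cast ENNReal.coe_le_coe.2 h2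
      calc (‖a‖₊ : ℝ≥0∞) ^ 2 ≤ ((‖a - b‖₊ : ℝ≥0∞) + (‖b‖₊ : ℝ≥0∞)) ^ 2 := by gcongr
        _ ≤ 4 * ((‖a - b‖₊ : ℝ≥0∞) ^ 2 + (‖b‖₊ : ℝ≥0∞) ^ 2) := stmt14_sq_add_le _ _
    calc f n x ≤ ∑' k, 4 * ((‖ς k a‖₊ : ℝ≥0∞) ^ 2 + (‖ς k b‖₊ : ℝ≥0∞) ^ 2) :=
        ENNReal.tsum_le_tsum fun k => stmt14_nnnorm_sq _ _
      _ = 4 * ((∑' k, (‖ς k a‖₊ : ℝ≥0∞) ^ 2) + ∑' k, (‖ς k b‖₊ : ℝ≥0∞) ^ 2) := by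
        rw [ENNReal.tsum_mul_left, ENNReal.tsum_add]
      _ ≤ 4 * (cC * (1 + (‖a‖₊ : ℝ≥0∞) ^ 2) + cC * (1 + (‖b‖₊ : ℝ≥0∞) ^ 2)) := by
        gcongr
        · exact hg' a
        · exact hg' b
      _ ≤ 4 * (cC * (1 + 4 * ((‖a - b‖₊ : ℝ≥0∞) ^ 2 + (‖b‖₊ : ℝ≥0∞) ^ 2))
            + cC * (1 + (‖b‖₊ : ℝ≥0∞) ^ 2)) := by gcongr
      _ = cC * (8 + 20 * (‖b‖₊ : ℝ≥0∞) ^ 2) + 16 * cC * (‖a - b‖₊ : ℝ≥0∞) ^ 2 := by ring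
      _ = G n x := rfl
  -- integrals of A and G
  set K : ℝ≥0∞ := ∫⁻ x, A x ∂μ with hKdef
  have hK : K ≠ ∞ := by
    have h1 : K = cC * ∫⁻ x, (8 + 20 * (‖u x‖₊ : ℝ≥0∞) ^ 2) ∂μ := by
      rw [hKdef]
      simp only [hAdef]
      exact lintegral_const_mul _ (measurable_const.add (measurable_const.mul
        (hu.enorm.pow_const 2)))
    have h2 : (∫⁻ x, (8 + 20 * (‖u x‖₊ : ℝ≥0∞) ^ 2) ∂μ)
        = 8 * μ Set.univ + 20 * ∫⁻ x, (‖u x‖₊ : ℝ≥0∞) ^ 2 ∂μ := by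
      rw [lintegral_add_left measurable_const, lintegral_const,
        lintegral_const_mul _ (f := fun x => (‖u x‖₊ : ℝ≥0∞) ^ 2) (hu.enorm.pow_const 2)]
    rw [h1, h2]
    exact ENNReal.mul_ne_top hcCtop (ENNReal.add_ne_top.2
      ⟨ENNReal.mul_ne_top (by norm_num) (measure_ne_top μ _),
        ENNReal.mul_ne_top (by norm_num) huL2.ne⟩)
  set r : ℕ → ℝ≥0∞ := fun n => 16 * cC * ∫⁻ x, (‖un n x - u x‖₊ : ℝ≥0∞) ^ 2 ∂μ with hrdef
  have hr : Tendsto r atTop (nhds 0) := by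
    have h1 := ENNReal.Tendsto.const_mul hL2 (Or.inr h16top)
    simpa using h1
  have hGint : ∀ n, (∫⁻ x, G n x ∂μ) = K + r n := by
    intro n
    simp only [hGdef, hrdef, hKdef]
    rw [lintegral_add_left hA_meas, lintegral_const_mul _ (hd_meas n)]
  -- q n = ∫ (G n - f n)
  set q : ℕ → ℝ≥0∞ := fun n => ∫⁻ x, (G n x - f n x) ∂μ with hqdef
  have hq_add : ∀ n, q n + (∫⁻ x, f n x ∂μ) = K + r n := by
    intro n
    rw [hqdef, ← hGint n]
    simp only
    rw [← lintegral_add_right _ (hf_meas n)]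
    exact lintegral_congr fun x => tsub_add_cancel_of_le (hfG n x)
  -- a.e. pointwise convergence of G n - f n to A
  have hps : ∀ᵐ x ∂μ, Tendsto (fun n => G n x - f n x) atTop (nhds (A x)) := by
    filter_upwards [hae] with x hx
    have hfp : Tendsto (fun n => f n x) atTop (nhds 0) :=
      stmt14_ptwise ς hςcont htail (u x) (fun n => un n x) hx
    have hGp : Tendsto (fun n => G n x) atTop (nhds (A x)) := by
      have h1 : Tendsto (fun n => un n x - u x) atTop (nhds 0) := by
        have h1' := hx.sub (tendsto_const_nhds (x := u x))
        rwa [sub_self] at h1'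
      have h2 : Tendsto (fun n => (‖un n x - u x‖₊ : ℝ≥0∞)) atTop (nhds 0) := by
        rw [show (0 : ℝ≥0∞) = ((0 : ℝ≥0) : ℝ≥0∞) by simp]
        exact ENNReal.tendsto_coe.2 (by simpa [Function.comp_def] using (continuous_nnnorm.tendsto (0 : H)).comp h1)
      have h3 : Tendsto (fun n => 16 * cC * (‖un n x - u x‖₊ : ℝ≥0∞) ^ 2) atTop (nhds 0) := by
        have h4 := ENNReal.Tendsto.pow (n := 2) h2
        have h5 := ENNReal.Tendsto.const_mul h4 (Or.inr h16top)
        simpa using h5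
      simpa using tendsto_const_nhds.add h3
    have hAx : A x ≠ ∞ := by
      simp only [hAdef]
      exact ENNReal.mul_ne_top hcCtop (ENNReal.add_ne_top.2
        ⟨by norm_num, ENNReal.mul_ne_top (by norm_num) (ENNReal.pow_ne_top ENNReal.coe_ne_top)⟩)
    simpa using ENNReal.Tendsto.sub hGp hfp (Or.inl hAx)
  -- Fatou: K ≤ liminf q
  have hFatou : K ≤ liminf q atTop := by
    have h1 : K = ∫⁻ x, liminf (fun n => G n x - f n x) atTop ∂μ := by
      refine lintegral_congr_ae ?_
      filter_upwards [hps] with x hx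
      exact hx.liminf_eq.symm
    rw [h1]
    exact lintegral_liminf_le fun n => (hG_meas n).sub (hf_meas n)
  -- eventual finiteness of q
  have hq_fin : ∀ᶠ n in atTop, q n ≠ ∞ := by
    have h1 : ∀ᶠ n in atTop, r n ≤ 1 := hr.eventually_le_const zero_lt_one
    filter_upwards [h1] with n hn
    have h2 : q n ≤ K + r n := by
      rw [← hq_add n]
      exact le_self_add
    exact ne_top_of_le_ne_top (ENNReal.add_ne_top.2
      ⟨hK, ne_top_of_le_ne_top ENNReal.one_ne_top hn⟩) h2
  -- key eventual bound
  have key : ∀ᶠ n in atTop, (∫⁻ x, f n x ∂μ) ≤ (K - q n) + r n := by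
    filter_upwards [hq_fin] with n hn
    have h1 : (∫⁻ x, f n x ∂μ) = (K + r n) - q n := by
      rw [← hq_add n, ENNReal.add_sub_cancel_left hn]
    rw [h1, tsub_le_iff_right]
    calc K + r n ≤ ((K - q n) + q n) + r n := by gcongr; exact le_tsub_add
      _ = (K - q n) + r n + q n := by ring
  -- the right-hand side tends to 0
  have hKq : Tendsto (fun n => K - q n) atTop (nhds 0) := by
    apply tendsto_of_le_liminf_of_limsup_le
    · exact zero_le
    · rw [ENNReal.limsup_const_sub _ _ hK]
      exact le_of_eq (tsub_eq_zero_of_le hFatou)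
    · isBoundedDefault
    · isBoundedDefault
  have hRHS : Tendsto (fun n => (K - q n) + r n) atTop (nhds 0) := by
    simpa using hKq.add hr
  exact tendsto_of_tendsto_of_tendsto_of_le_of_le' tendsto_const_nhds hRHS
    (Eventually.of_forall fun n => zero_le) key
end
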